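/- arXiv:2603.01362 — 2 statements merged into one kernel-verified Lean document; each statement's English description precedes it below -/
import Mathlib

section
/- (Uniform Gronwall lemma) Let g, h, y be nonnegative locally integrable functions on (t_0, ∞) with y absolutely continuous, satisfying y'(t) ≤ g(t) y(t) + h(t) for a.e. t > t_0. Suppose there exist positive constants r, a_1, a_2, a_3 such that for all t > t_0: ∫_t^{t+r} g ≤ a_1, ∫_t^{t+r} h ≤ a_2, and ∫_t^{t+r} y ≤ a_3. Then y(t + r) ≤ (a_3/r + a_2) e^{a_1} for all t ≥ t_0. -/
open MeasureTheory intervalIntegral Set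

lemma ug_key {g A : ℝ → ℝ} {s T : ℝ} (hsT : s ≤ T)
    (hgi : IntervalIntegrable g volume s T)
    (hA : ∀ u, A u = ∫ v in s..u, g v) (k : ℕ) :
    ∀ τ ∈ Set.Icc s T, (∫ u in s..τ, g u * A u ^ k) = A τ ^ (k + 1) / (k + 1) := by
  have hAcont : ContinuousOn A (Icc s T) := by
    have h1 := continuousOn_primitive_interval' hgi (left_mem_uIcc (a := s) (b := T))
    rw [Set.uIcc_of_le hsT] at h1
    exact h1.congr fun u _ => hA u
  have hgi' : ∀ {a b : ℝ}, s ≤ a → a ≤ b → b ≤ T → IntervalIntegrable g volume a b := by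
    intro a b ha hab hb
    refine hgi.mono_set ?_
    rw [Set.uIcc_of_le hab, Set.uIcc_of_le hsT]
    exact Set.Icc_subset_Icc ha hb
  have hAk : ∀ (j : ℕ) {τ : ℝ}, τ ∈ Icc s T →
      IntervalIntegrable (fun u => g u * A u ^ j) volume s τ := by
    intro j τ hτ
    refine (hgi' le_rfl hτ.1 hτ.2).mul_continuousOn ?_
    rw [Set.uIcc_of_le hτ.1]
    exact ((hAcont.mono (Icc_subset_Icc le_rfl hτ.2)).pow j)
  induction k with
  | zero =>
    intro τ hτ
    rw [hA τ]
    norm_num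
  | succ k ih =>
    intro τ hτ
    set x := A τ with hx
    -- work over the restricted measures
    set μ : Measure ℝ := volume.restrict (Ioc s τ) with hμ
    have hgInt : IntegrableOn g (Ioc s τ) volume := (hgi' le_rfl hτ.1 hτ.2).1
    have hΦInt : IntegrableOn (fun u => g u * A u ^ k) (Ioc s τ) volume := (hAk k hτ).1
    have hΦInt' : IntegrableOn (fun u => g u * A u ^ (k + 1)) (Ioc s τ) volume :=
      (hAk (k + 1) hτ).1
    set F : ℝ × ℝ → ℝ :=
      fun p => {q : ℝ × ℝ | q.2 ≤ q.1}.indicator (fun q => (g q.1 * A q.1 ^ k) * g q.2) p with hF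
    have hFmeas : MeasurableSet {q : ℝ × ℝ | q.2 ≤ q.1} :=
      measurableSet_le measurable_snd measurable_fst
    have hFint : Integrable F (μ.prod μ) := by
      have hprod : Integrable (fun p : ℝ × ℝ => |g p.1 * A p.1 ^ k| * |g p.2|) (μ.prod μ) :=
        hΦInt.abs.mul_prod hgInt.abs
      refine hprod.mono' ?_ ?_
      · exact ((hΦInt.aestronglyMeasurable.comp_fst).mul
          (hgInt.aestronglyMeasurable.comp_snd)).indicator hFmeas
      · refine Filter.Eventually.of_forall fun p => ?_
        calc ‖F p‖ ≤ ‖(g p.1 * A p.1 ^ k) * g p.2‖ := norm_indicator_le_norm_self _ _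
        _ = |g p.1 * A p.1 ^ k| * |g p.2| := abs_mul _ _
    -- first iterated integral
    have h1 : (∫ u, (∫ v, F (u, v) ∂μ) ∂μ) = ∫ u in Ioc s τ, g u * A u ^ (k + 1) := by
      refine setIntegral_congr_fun measurableSet_Ioc fun u hu => ?_
      have : ∀ v : ℝ, F (u, v) = (Set.Iic u).indicator (fun v => (g u * A u ^ k) * g v) v := by
        intro v
        by_cases hv : v ≤ u <;> simp [hF, Set.indicator, hv]
      simp only [this]
      rw [setIntegral_indicator measurableSet_Iic]
      have : Ioc s τ ∩ Iic u = Ioc s u := by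
        ext z; simp only [mem_inter_iff, mem_Ioc, mem_Iic]
        exact ⟨fun hz => ⟨hz.1.1, hz.2⟩, fun hz => ⟨⟨hz.1, hz.2.trans hu.2⟩, hz.2⟩⟩
      rw [this, MeasureTheory.integral_const_mul]
      have hAu : A u = ∫ v in Ioc s u, g v := by
        rw [hA u, intervalIntegral.integral_of_le hu.1.le]
      rw [← hAu]; ring
    -- second iterated integral
    have h2 : (∫ v, (∫ u, F (u, v) ∂μ) ∂μ)
        = ∫ v in Ioc s τ, g v * ((x ^ (k + 1) - A v ^ (k + 1)) / (k + 1)) := by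
      refine setIntegral_congr_fun measurableSet_Ioc fun v hv => ?_
      have hvT : v ∈ Icc s T := ⟨hv.1.le, hv.2.trans hτ.2⟩
      have : ∀ u : ℝ, F (u, v) = (Set.Ici v).indicator (fun u => (g u * A u ^ k) * g v) u := by
        intro u
        by_cases hu : v ≤ u <;> simp [hF, Set.indicator, hu]
      simp only [this]
      rw [setIntegral_indicator measurableSet_Ici]
      have : Ioc s τ ∩ Ici v = Icc v τ := by
        ext z; simp only [mem_inter_iff, mem_Ioc, mem_Icc, mem_Ici]
        exact ⟨fun hz => ⟨hz.2, hz.1.2⟩, fun hz => ⟨⟨hv.1.trans_le hz.1, hz.2⟩, hz.1⟩⟩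
      rw [this, MeasureTheory.integral_Icc_eq_integral_Ioc, MeasureTheory.integral_mul_const,
        ← intervalIntegral.integral_of_le hv.2]
      have hadd := intervalIntegral.integral_add_adjacent_intervals
        (a := s) (b := v) (c := τ) (hAk k hvT)
        ((hAk k hτ).mono_set (by
          rw [Set.uIcc_of_le hv.2, Set.uIcc_of_le (hv.1.le.trans hv.2)]
          exact Icc_subset_Icc hv.1.le le_rfl))
      have hIv := ih v hvT
      have hIτ := ih τ hτ
      have : (∫ u in v..τ, g u * A u ^ k) = (x ^ (k + 1) - A v ^ (k + 1)) / (k + 1) := by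
        rw [← hadd] at hIτ
        rw [hIv] at hIτ
        field_simp at hIτ ⊢
        linarith
      rw [this]; ring
    -- Fubini
    have hswap : (∫ u, (∫ v, F (u, v) ∂μ) ∂μ) = ∫ v, (∫ u, F (u, v) ∂μ) ∂μ := by
      exact MeasureTheory.integral_integral_swap (f := fun u v => F (u, v)) hFint
    -- compute the right-hand side of h2
    have h3 : (∫ v in Ioc s τ, g v * ((x ^ (k + 1) - A v ^ (k + 1)) / (k + 1)))
        = (x ^ (k + 1) * x - (∫ u in Ioc s τ, g u * A u ^ (k + 1))) / (k + 1) := by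
      have heq : ∀ v : ℝ, g v * ((x ^ (k + 1) - A v ^ (k + 1)) / (k + 1))
          = (x ^ (k + 1) / (k + 1)) * g v - (1 / (k + 1)) * (g v * A v ^ (k + 1)) := by
        intro v; ring
      simp only [heq]
      rw [MeasureTheory.integral_sub (hgInt.const_mul _) (hΦInt'.const_mul _),
        MeasureTheory.integral_const_mul, MeasureTheory.integral_const_mul]
      have hxA : (∫ v in Ioc s τ, g v) = x := by
        rw [hx, hA τ, intervalIntegral.integral_of_le hτ.1]
      rw [hxA]; ring
    -- put everything together
    have hfinal : (∫ u in Ioc s τ, g u * A u ^ (k + 1))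
        = x ^ (k + 1 + 1) / (k + 1 + 1) := by
      have h4 : (∫ u in Ioc s τ, g u * A u ^ (k + 1))
          = (x ^ (k + 1) * x - (∫ u in Ioc s τ, g u * A u ^ (k + 1))) / (k + 1) := by
        conv_lhs => rw [← h1]
        rw [hswap, h2, h3]
      set I := ∫ u in Ioc s τ, g u * A u ^ (k + 1)
      have hk1 : (0:ℝ) < (k:ℝ) + 1 := by positivity
      field_simp at h4
      have : I * ((k:ℝ) + 1) + I = x ^ (k+1) * x := by linarith
      have hk2 : ((k:ℝ) + 1 + 1) ≠ 0 := by positivity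
      rw [pow_succ]
      field_simp
      push_cast
      linarith
    rw [intervalIntegral.integral_of_le hτ.1, hfinal]
    push_cast
    ring_nf

lemma ug_gronwall {g y : ℝ → ℝ} {s T c M : ℝ} (hsT : s ≤ T)
    (hgi : IntervalIntegrable g volume s T) (hg0 : ∀ u ∈ Set.Icc s T, 0 ≤ g u)
    (hycont : ContinuousOn y (Set.Icc s T)) (hM : ∀ u ∈ Set.Icc s T, y u ≤ M)
    (hM0 : 0 ≤ M) (hc : 0 ≤ c)
    (hkey : ∀ τ ∈ Set.Icc s T, y τ ≤ c + ∫ u in s..τ, g u * y u) :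
    y T ≤ c * Real.exp (∫ u in s..T, g u) := by
  set A : ℝ → ℝ := fun u => ∫ v in s..u, g v with hAdef
  have hA : ∀ u, A u = ∫ v in s..u, g v := fun u => rfl
  have hE := ug_key hsT hgi hA
  have hAcont : ContinuousOn A (Icc s T) := by
    have h1 := continuousOn_primitive_interval' hgi (left_mem_uIcc (a := s) (b := T))
    rwa [Set.uIcc_of_le hsT] at h1
  have hgi' : ∀ {a b : ℝ}, s ≤ a → a ≤ b → b ≤ T → IntervalIntegrable g volume a b := by
    intro a b ha hab hb
    refine hgi.mono_set ?_
    rw [Set.uIcc_of_le hab, Set.uIcc_of_le hsT]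
    exact Set.Icc_subset_Icc ha hb
  have hAk : ∀ (j : ℕ) {τ : ℝ}, τ ∈ Icc s T →
      IntervalIntegrable (fun u => g u * A u ^ j) volume s τ := by
    intro j τ hτ
    refine (hgi' le_rfl hτ.1 hτ.2).mul_continuousOn ?_
    rw [Set.uIcc_of_le hτ.1]
    exact ((hAcont.mono (Icc_subset_Icc le_rfl hτ.2)).pow j)
  have hA0 : ∀ u ∈ Icc s T, 0 ≤ A u := by
    intro u hu
    rw [hA u]
    refine intervalIntegral.integral_nonneg hu.1 fun v hv => ?_
    exact hg0 v ⟨hv.1, hv.2.trans hu.2⟩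
  -- the Picard iteration bound
  have main : ∀ n : ℕ, ∀ τ ∈ Icc s T,
      y τ ≤ c * (∑ k ∈ Finset.range n, A τ ^ k / (Nat.factorial k)) +
        M * A τ ^ n / (Nat.factorial n) := by
    intro n
    induction n with
    | zero =>
      intro τ hτ
      simpa using hM τ hτ
    | succ n ih =>
      intro τ hτ
      have hΦcont : ContinuousOn
          (fun u => c * (∑ k ∈ Finset.range n, A u ^ k / (Nat.factorial k)) +
            M * A u ^ n / (Nat.factorial n)) (Icc s T) := by
        apply ContinuousOn.add
        · exact continuousOn_const.mul (continuousOn_finset_sum _ fun k _ =>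
            (hAcont.pow k).div_const _)
        · exact (continuousOn_const.mul (hAcont.pow n)).div_const _
      have hint1 : IntervalIntegrable (fun u => g u * y u) volume s τ :=
        (hgi' le_rfl hτ.1 hτ.2).mul_continuousOn (by
          rw [Set.uIcc_of_le hτ.1]
          exact hycont.mono (Icc_subset_Icc le_rfl hτ.2))
      have hint2 : IntervalIntegrable (fun u => g u *
          (c * (∑ k ∈ Finset.range n, A u ^ k / (Nat.factorial k)) +
            M * A u ^ n / (Nat.factorial n))) volume s τ :=
        (hgi' le_rfl hτ.1 hτ.2).mul_continuousOn (by
          rw [Set.uIcc_of_le hτ.1]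
          exact hΦcont.mono (Icc_subset_Icc le_rfl hτ.2))
      have step1 : y τ ≤ c + ∫ u in s..τ, g u *
          (c * (∑ k ∈ Finset.range n, A u ^ k / (Nat.factorial k)) +
            M * A u ^ n / (Nat.factorial n)) := by
        refine (hkey τ hτ).trans (add_le_add_right ?_ c)
        refine intervalIntegral.integral_mono_on hτ.1 hint1 hint2 fun u hu => ?_
        have huT : u ∈ Icc s T := ⟨hu.1, hu.2.trans hτ.2⟩
        exact mul_le_mul_of_nonneg_left (ih u huT) (hg0 u huT)
      -- compute the integral
      have expand : ∀ u : ℝ, g u *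
          (c * (∑ k ∈ Finset.range n, A u ^ k / (Nat.factorial k)) +
            M * A u ^ n / (Nat.factorial n)) =
          (∑ k ∈ Finset.range n, (c / (Nat.factorial k)) * (g u * A u ^ k)) +
            (M / (Nat.factorial n)) * (g u * A u ^ n) := by
        intro u
        simp only [mul_add, Finset.mul_sum]
        congr 1
        · exact Finset.sum_congr rfl fun k _ => by ring
        · ring
      have hintsum : (∫ u in s..τ, g u *
          (c * (∑ k ∈ Finset.range n, A u ^ k / (Nat.factorial k)) +
            M * A u ^ n / (Nat.factorial n))) =
          (∑ k ∈ Finset.range n, (c / (Nat.factorial k)) * (A τ ^ (k+1) / (k+1))) +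
            (M / (Nat.factorial n)) * (A τ ^ (n+1) / (n+1)) := by
        simp only [expand]
        have hsint : IntervalIntegrable
            (fun u => ∑ k ∈ Finset.range n, (c / (Nat.factorial k : ℝ)) * (g u * A u ^ k))
            volume s τ := by
          have := IntervalIntegrable.sum (μ := volume) (a := s) (b := τ) (Finset.range n)
            (f := fun k => fun u => (c / (Nat.factorial k : ℝ)) * (g u * A u ^ k))
            (fun k _ => (hAk k hτ).const_mul _)
          have heq : (fun u => ∑ k ∈ Finset.range n, (c / (Nat.factorial k : ℝ)) * (g u * A u ^ k))
              = ∑ k ∈ Finset.range n, fun u => (c / (Nat.factorial k : ℝ)) * (g u * A u ^ k) := by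
            funext u
            simp
          rw [heq]
          exact this
        rw [intervalIntegral.integral_add hsint ((hAk n hτ).const_mul _)]
        rw [intervalIntegral.integral_finset_sum fun k _ => (hAk k hτ).const_mul _]
        rw [intervalIntegral.integral_const_mul, hE n τ hτ]
        congr 1
        exact Finset.sum_congr rfl fun k _ => by
          rw [intervalIntegral.integral_const_mul, hE k τ hτ]
      rw [hintsum] at step1
      refine step1.trans (le_of_eq ?_)
      have hterm : ∀ k : ℕ, c / (Nat.factorial k : ℝ) * (A τ ^ (k + 1) / ((k : ℝ) + 1))
          = c * (A τ ^ (k + 1) / (Nat.factorial (k + 1) : ℝ)) := by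
        intro k
        rw [Nat.factorial_succ]
        push_cast
        rw [div_mul_div_comm, mul_comm ((k : ℝ) + 1) ((Nat.factorial k : ℕ) : ℝ), mul_div_assoc]
      have hM' : M / (Nat.factorial n : ℝ) * (A τ ^ (n + 1) / ((n : ℝ) + 1))
          = M * A τ ^ (n + 1) / (Nat.factorial (n + 1) : ℝ) := by
        rw [Nat.factorial_succ]
        push_cast
        rw [div_mul_div_comm, mul_comm ((n : ℝ) + 1) ((Nat.factorial n : ℕ) : ℝ)]
      rw [Finset.sum_congr rfl fun k _ => hterm k, hM']
      rw [Finset.sum_range_succ' (fun k => A τ ^ k / (Nat.factorial k : ℝ)) n]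
      rw [mul_add, Finset.mul_sum]
      norm_num
      ring
  -- pass to the limit
  have hx0 : 0 ≤ A T := hA0 T ⟨hsT, le_rfl⟩
  have hlim : ∀ n : ℕ, y T ≤ c * Real.exp (A T) + M * A T ^ n / (Nat.factorial n) := by
    intro n
    refine (main n T ⟨hsT, le_rfl⟩).trans (add_le_add_left ?_ _)
    exact mul_le_mul_of_nonneg_left (Real.sum_le_exp_of_nonneg hx0 n) hc
  have htend : Filter.Tendsto (fun n : ℕ => c * Real.exp (A T) + M * A T ^ n / (Nat.factorial n))
      Filter.atTop (nhds (c * Real.exp (A T) + 0)) := by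
    refine Filter.Tendsto.add tendsto_const_nhds ?_
    have := (FloorSemiring.tendsto_pow_div_factorial_atTop (A T)).const_mul M
    simpa [mul_div_assoc] using this
  have := ge_of_tendsto htend (Filter.Eventually.of_forall hlim)
  simpa using this

/-- Uniform Gronwall lemma: if `y' ≤ g y + h` a.e. on `(t₀,∞)` (with `y` locally
absolutely continuous, encoded via the fundamental theorem of calculus for `y'`),
and the sliding-window integrals of `g, h, y` over windows of length `r` are bounded by
`a₁, a₂, a₃`, then `y(t+r) ≤ (a₃/r + a₂) e^{a₁}` for all `t ≥ t₀`. -/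
theorem stmt3 (t0 r a1 a2 a3 : ℝ) (hr : 0 < r) (ha1 : 0 < a1) (ha2 : 0 < a2) (ha3 : 0 < a3)
    (g h y y' : ℝ → ℝ)
    (hg0 : ∀ t, t0 < t → 0 ≤ g t) (hh0 : ∀ t, t0 < t → 0 ≤ h t) (hy0 : ∀ t, t0 < t → 0 ≤ y t)
    -- local integrability on the sliding windows
    (hgint : ∀ t, t0 < t → IntervalIntegrable g volume t (t + r))
    (hhint : ∀ t, t0 < t → IntervalIntegrable h volume t (t + r))
    (hyint : ∀ t, t0 < t → IntervalIntegrable y volume t (t + r))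
    -- `y` is locally absolutely continuous with a.e. derivative `y'`
    (hy'int : ∀ t1 t2, t0 < t1 → t1 ≤ t2 → IntervalIntegrable y' volume t1 t2)
    (hftc : ∀ t1 t2, t0 < t1 → t1 ≤ t2 → y t2 - y t1 = ∫ τ in t1..t2, y' τ)
    -- differential inequality holding almost everywhere on `(t₀, ∞)`
    (hineq : ∀ᵐ t, t ∈ Set.Ioi t0 → y' t ≤ g t * y t + h t)
    -- sliding-window integral bounds
    (hga : ∀ t, t0 < t → (∫ τ in t..(t + r), g τ) ≤ a1)
    (hha : ∀ t, t0 < t → (∫ τ in t..(t + r), h τ) ≤ a2)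
    (hya : ∀ t, t0 < t → (∫ τ in t..(t + r), y τ) ≤ a3) :
    ∀ t, t0 ≤ t → y (t + r) ≤ (a3 / r + a2) * Real.exp a1 := by
  -- continuity of y on compact subintervals of (t0, ∞)
  have hycont : ∀ p P : ℝ, t0 < p → p ≤ P → ContinuousOn y (Set.Icc p P) := by
    intro p P hp hpP
    have hcont : ContinuousOn (fun τ => y p + ∫ u in p..τ, y' u) (Set.Icc p P) := by
      have h1 := continuousOn_primitive_interval' (hy'int p P hp hpP)
        (left_mem_uIcc (a := p) (b := P))
      rw [Set.uIcc_of_le hpP] at h1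
      exact continuousOn_const.add h1
    refine hcont.congr fun τ hτ => ?_
    have := hftc p τ hp hτ.1
    linarith
  -- main estimate for t0 < t
  have main : ∀ t : ℝ, t0 < t → y (t + r) ≤ (a3 / r + a2) * Real.exp a1 := by
    intro t ht
    set T := t + r with hT
    have htT : t ≤ T := by simp [hT]; linarith
    -- pointwise estimate for every s ∈ (t, T]
    have key : ∀ s, s ∈ Set.Ioc t T → y T ≤ (y s + a2) * Real.exp a1 := by
      intro s hs
      have hs0 : t0 < s := ht.trans_le hs.1.le
      have hsT : s ≤ T := hs.2
      have hTr : T ≤ s + r := by simp [hT]; linarith [hs.1.le]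
      have hsub : ∀ {f : ℝ → ℝ}, IntervalIntegrable f volume s (s + r) →
          IntervalIntegrable f volume s T := by
        intro f hf
        refine hf.mono_set ?_
        rw [Set.uIcc_of_le hsT, Set.uIcc_of_le (by linarith : s ≤ s + r)]
        exact Set.Icc_subset_Icc le_rfl hTr
      have hgi : IntervalIntegrable g volume s T := hsub (hgint s hs0)
      have hhi : IntervalIntegrable h volume s T := hsub (hhint s hs0)
      have hyc : ContinuousOn y (Set.Icc s T) := hycont s T hs0 hsT
      -- bound for y on [s, T]
      obtain ⟨M, hMb⟩ := (isCompact_Icc (a := s) (b := T)).exists_bound_of_continuousOn hyc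
      have hM : ∀ u ∈ Set.Icc s T, y u ≤ M := fun u hu => (le_abs_self _).trans (hMb u hu)
      have hM0 : 0 ≤ M := le_trans (abs_nonneg _) (hMb s ⟨le_rfl, hsT⟩)
      set c := y s + ∫ u in s..T, h u with hc
      have hIh0 : 0 ≤ ∫ u in s..T, h u :=
        intervalIntegral.integral_nonneg hsT fun u hu => hh0 u (hs0.trans_le hu.1)
      have hc0 : 0 ≤ c := add_nonneg (hy0 s hs0) hIh0
      -- tail positivity for h, g on [T, s+r]
      have hIh2 : (∫ u in s..T, h u) ≤ a2 := by
        have hadd := intervalIntegral.integral_add_adjacent_intervals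
          (a := s) (b := T) (c := s + r) (hsub (hhint s hs0))
          ((hhint s hs0).mono_set (by
            rw [Set.uIcc_of_le hTr, Set.uIcc_of_le (by linarith : s ≤ s + r)]
            exact Set.Icc_subset_Icc hsT le_rfl))
        have hpos : 0 ≤ ∫ u in T..(s + r), h u :=
          intervalIntegral.integral_nonneg hTr fun u hu =>
            hh0 u (lt_of_lt_of_le hs0 (hsT.trans hu.1))
        have := hha s hs0
        linarith [hadd]
      have hIg2 : (∫ u in s..T, g u) ≤ a1 := by
        have hadd := intervalIntegral.integral_add_adjacent_intervals
          (a := s) (b := T) (c := s + r) (hsub (hgint s hs0))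
          ((hgint s hs0).mono_set (by
            rw [Set.uIcc_of_le hTr, Set.uIcc_of_le (by linarith : s ≤ s + r)]
            exact Set.Icc_subset_Icc hsT le_rfl))
        have hpos : 0 ≤ ∫ u in T..(s + r), g u :=
          intervalIntegral.integral_nonneg hTr fun u hu =>
            hg0 u (lt_of_lt_of_le hs0 (hsT.trans hu.1))
        have := hga s hs0
        linarith [hadd]
      -- the integral inequality
      have hkey : ∀ τ ∈ Set.Icc s T, y τ ≤ c + ∫ u in s..τ, g u * y u := by
        intro τ hτ
        have hgyi : IntervalIntegrable (fun u => g u * y u) volume s τ :=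
          (hgi.mono_set (by
            rw [Set.uIcc_of_le hτ.1, Set.uIcc_of_le hsT]
            exact Set.Icc_subset_Icc le_rfl hτ.2)).mul_continuousOn (by
            rw [Set.uIcc_of_le hτ.1]
            exact hyc.mono (Set.Icc_subset_Icc le_rfl hτ.2))
        have hhi' : IntervalIntegrable h volume s τ := hhi.mono_set (by
          rw [Set.uIcc_of_le hτ.1, Set.uIcc_of_le hsT]
          exact Set.Icc_subset_Icc le_rfl hτ.2)
        have hftc' := hftc s τ hs0 hτ.1
        have hmono : (∫ u in s..τ, y' u) ≤ ∫ u in s..τ, (g u * y u + h u) := by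
          refine intervalIntegral.integral_mono_ae_restrict hτ.1
            (hy'int s τ hs0 hτ.1) (hgyi.add hhi') ?_
          filter_upwards [ae_restrict_of_ae hineq,
            ae_restrict_mem (measurableSet_Icc (a := s) (b := τ))] with u h1 h2
          exact h1 (hs0.trans_le h2.1)
        rw [intervalIntegral.integral_add hgyi hhi'] at hmono
        have htail : (∫ u in s..τ, h u) ≤ ∫ u in s..T, h u := by
          have hadd := intervalIntegral.integral_add_adjacent_intervals
            (a := s) (b := τ) (c := T) hhi'
            (hhi.mono_set (by
              rw [Set.uIcc_of_le hτ.2, Set.uIcc_of_le hsT]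
              exact Set.Icc_subset_Icc hτ.1 le_rfl))
          have hpos : 0 ≤ ∫ u in τ..T, h u :=
            intervalIntegral.integral_nonneg hτ.2 fun u hu =>
              hh0 u (lt_of_lt_of_le hs0 (hτ.1.trans hu.1))
          linarith [hadd]
        rw [hc]
        linarith
      -- apply Gronwall
      have hg0' : ∀ u ∈ Set.Icc s T, 0 ≤ g u := fun u hu => hg0 u (hs0.trans_le hu.1)
      have := ug_gronwall hsT hgi hg0' hyc hM hM0 hc0 hkey
      calc y T ≤ c * Real.exp (∫ u in s..T, g u) := this
        _ ≤ c * Real.exp a1 := by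
            exact mul_le_mul_of_nonneg_left (Real.exp_le_exp.2 hIg2) hc0
        _ ≤ (y s + a2) * Real.exp a1 := by
            refine mul_le_mul_of_nonneg_right ?_ (Real.exp_nonneg _)
            rw [hc]; linarith
    -- averaging over s ∈ (t, T]
    have hmono2 : (∫ s in t..T, (fun _ => y T) s) ≤ ∫ s in t..T, (y s + a2) * Real.exp a1 := by
      refine intervalIntegral.integral_mono_ae_restrict htT
        intervalIntegrable_const
        (((hyint t ht).add intervalIntegrable_const).mul_const _) ?_
      have hne : ∀ᵐ s_1 : ℝ, s_1 ≠ t := by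
        rw [Filter.Eventually]
        have : {s_1 : ℝ | s_1 ≠ t}ᶜ = {t} := by ext z; simp
        rw [mem_ae_iff, this]
        exact Real.volume_singleton
      filter_upwards [ae_restrict_of_ae hne,
        ae_restrict_mem (measurableSet_Icc (a := t) (b := T))] with s h1 h2
      exact key s ⟨lt_of_le_of_ne h2.1 (Ne.symm h1), h2.2⟩
    rw [intervalIntegral.integral_const] at hmono2
    have hTt : T - t = r := by simp [hT]
    rw [hTt, smul_eq_mul] at hmono2
    have hrhs : (∫ s in t..T, (y s + a2) * Real.exp a1)
        = ((∫ s in t..T, y s) + r * a2) * Real.exp a1 := by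
      rw [intervalIntegral.integral_mul_const,
        intervalIntegral.integral_add (hyint t ht) intervalIntegrable_const,
        intervalIntegral.integral_const, hTt, smul_eq_mul]
    rw [hrhs] at hmono2
    have hy3 := hya t ht
    have hfin : r * y T ≤ (a3 + r * a2) * Real.exp a1 := by
      refine hmono2.trans ?_
      exact mul_le_mul_of_nonneg_right (by linarith) (Real.exp_nonneg _)
    rw [div_add' _ _ _ (ne_of_gt hr)]
    rw [div_mul_eq_mul_div, le_div_iff₀ hr]
    calc y (t + r) * r = r * y T := by rw [hT]; ring
      _ ≤ (a3 + r * a2) * Real.exp a1 := hfin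
      _ = (a3 + a2 * r) * Real.exp a1 := by ring
  -- boundary case t = t0 by continuity
  intro t ht
  rcases lt_or_eq_of_le ht with ht' | ht'
  · exact main t ht'
  · subst ht'
    have hcont : ContinuousAt y (t0 + r) := by
      have h1 := hycont (t0 + r / 2) (t0 + 2 * r) (by linarith) (by linarith)
      exact h1.continuousAt (Icc_mem_nhds (by linarith) (by linarith))
    have htend : Filter.Tendsto (fun u => y (u + r)) (nhdsWithin t0 (Set.Ioi t0))
        (nhds (y (t0 + r))) := by
      have h2 : Filter.Tendsto (fun u : ℝ => u + r) (nhdsWithin t0 (Set.Ioi t0))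
          (nhds (t0 + r)) :=
        ((continuous_id.add continuous_const).tendsto t0).mono_left nhdsWithin_le_nhds
      exact hcont.tendsto.comp h2
    refine le_of_tendsto htend ?_
    filter_upwards [self_mem_nhdsWithin] with u hu
    exact main u hu
end

section
/- Let E_1 and E be Banach spaces with E_1 compactly embedded in E, let X ⊂ E_1, and suppose there is a map S : X → X with S(X) = X satisfying the smoothing estimate ‖S a_1 − S a_2‖_{E_1} ≤ C ‖a_1 − a_2‖_E for all a_1, a_2 ∈ X and some constant C > 0. Then the fractal (box-counting) dimension of X in E is finite and bounded by the Kolmogorov entropy: dim_f(X, E) ≤ log_2 N_{1/(4C)}(B_{E_1}(0,1), E), where N_η(M, E) is the minimal number of closed E-balls of radius η covering M. -/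
open Metric Filter Topology

/-- Minimal number of closed balls of radius `η` in `α` needed to cover `M`. -/
noncomputable def coverNum {α : Type*} [PseudoMetricSpace α] (M : Set α) (η : ℝ) : ℕ :=
  sInf {n : ℕ | ∃ s : Finset α, s.card = n ∧ M ⊆ ⋃ c ∈ s, closedBall c η}

lemma coverNum_le_card {α : Type*} [PseudoMetricSpace α] {M : Set α} {η : ℝ}
    {s : Finset α} (h : M ⊆ ⋃ c ∈ s, closedBall c η) : coverNum M η ≤ s.card :=
  Nat.sInf_le ⟨s, rfl, h⟩

lemma coverNum_spec {α : Type*} [PseudoMetricSpace α] {M : Set α} {η : ℝ}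
    (h : ∃ s : Finset α, M ⊆ ⋃ c ∈ s, closedBall c η) :
    ∃ s : Finset α, s.card = coverNum M η ∧ M ⊆ ⋃ c ∈ s, closedBall c η := by
  obtain ⟨s, hs⟩ := h
  exact Nat.sInf_mem (⟨s.card, s, rfl, hs⟩ :
    {n : ℕ | ∃ s : Finset α, s.card = n ∧ M ⊆ ⋃ c ∈ s, closedBall c η}.Nonempty)

lemma one_le_coverNum {α : Type*} [PseudoMetricSpace α] {M : Set α} {η : ℝ}
    (hM : M.Nonempty) (h : ∃ s : Finset α, M ⊆ ⋃ c ∈ s, closedBall c η) :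
    1 ≤ coverNum M η := by
  obtain ⟨s, hcard, hcov⟩ := coverNum_spec h
  rcases Nat.eq_zero_or_pos (coverNum M η) with h0 | h1
  · exfalso
    rw [h0, Finset.card_eq_zero] at hcard
    subst hcard
    obtain ⟨x, hx⟩ := hM
    simpa using hcov hx
  · exact h1

lemma coverNum_anti {α : Type*} [PseudoMetricSpace α] {M : Set α} {η η' : ℝ}
    (hη : η ≤ η') (h : ∃ s : Finset α, M ⊆ ⋃ c ∈ s, closedBall c η) :
    coverNum M η' ≤ coverNum M η ∧ ∃ s : Finset α, M ⊆ ⋃ c ∈ s, closedBall c η' := by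
  obtain ⟨s, hcard, hcov⟩ := coverNum_spec h
  have hcov' : M ⊆ ⋃ c ∈ s, closedBall c η' :=
    hcov.trans (Set.iUnion₂_mono fun c _ => closedBall_subset_closedBall hη)
  exact ⟨hcard ▸ coverNum_le_card hcov', s, hcov'⟩

/-- Zelik's squeezing criterion: if `E₁` is compactly embedded in `E` (via a continuous
linear injection `ι` whose image of the unit ball is precompact), `X ⊆ E₁`, and
`S : X → X` is onto and satisfies the smoothing property
`‖S a₁ - S a₂‖_{E₁} ≤ C ‖a₁ - a₂‖_E`, then the fractal (box-counting) dimension of `X`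
in `E` is finite and bounded by the Kolmogorov entropy
`log₂ N_{1/(4C)}(B_{E₁}(0,1), E)`. -/
theorem stmt10 {E₁ E : Type*} [NormedAddCommGroup E₁] [NormedSpace ℝ E₁]
    [NormedAddCommGroup E] [NormedSpace ℝ E]
    (ι : E₁ →L[ℝ] E) (hinj : Function.Injective ι)
    (hcpt : IsCompact (closure (ι '' closedBall (0 : E₁) 1)))
    (X : Set E₁) (S : E₁ → E₁) (hSX : S '' X = X)
    (C : ℝ) (hC : 0 < C)
    (hsmooth : ∀ a₁ ∈ X, ∀ a₂ ∈ X, ‖S a₁ - S a₂‖ ≤ C * ‖ι a₁ - ι a₂‖) :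
    Filter.limsup
        (fun η : ℝ => Real.logb 2 (coverNum (ι '' X) η) / Real.logb 2 (1 / η))
        (𝓝[>] (0 : ℝ)) ≤
      Real.logb 2 (coverNum (ι '' closedBall (0 : E₁) 1) (1 / (4 * C))) := by
  classical
  set B : Set E := ι '' closedBall (0 : E₁) 1 with hB
  set N : ℕ := coverNum B (1 / (4 * C)) with hNdef
  set f : ℝ → ℝ := fun η => Real.logb 2 (coverNum (ι '' X) η) / Real.logb 2 (1 / η) with hf
  -- a cover of B exists
  have hcovB : ∃ t : Finset E, B ⊆ ⋃ c ∈ t, closedBall c (1 / (4 * C)) := by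
    have htb : TotallyBounded B := hcpt.totallyBounded.subset subset_closure
    obtain ⟨t, htf, ht⟩ := (Metric.totallyBounded_iff.mp htb) (1 / (4 * C)) (by positivity)
    refine ⟨htf.toFinset, ht.trans ?_⟩
    intro x hx
    simp only [Set.mem_iUnion] at hx ⊢
    obtain ⟨y, hy, hxy⟩ := hx
    exact ⟨y, htf.mem_toFinset.mpr hy, ball_subset_closedBall hxy⟩
  have hBne : B.Nonempty := ⟨ι 0, 0, by simp, rfl⟩
  have hN1 : 1 ≤ N := one_le_coverNum hBne hcovB
  have hL : 0 ≤ Real.logb 2 (N : ℝ) :=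
    Real.logb_nonneg one_lt_two (by exact_mod_cast hN1)
  -- key squeezing step
  have key : ∀ ε : ℝ, 0 < ε → (∃ s : Finset E, ι '' X ⊆ ⋃ c ∈ s, closedBall c ε) →
      (∃ s : Finset E, ι '' X ⊆ ⋃ c ∈ s, closedBall c (ε / 2)) ∧
      coverNum (ι '' X) (ε / 2) ≤ N * coverNum (ι '' X) ε := by
    intro ε hε hcov
    obtain ⟨s, hscard, hscov⟩ := coverNum_spec hcov
    obtain ⟨t, htcard, htcov⟩ := coverNum_spec hcovB
    set x : E → E₁ := fun c =>
      if h : (X ∩ ι ⁻¹' closedBall c ε).Nonempty then h.choose else 0 with hxdef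
    have hx : ∀ c, (X ∩ ι ⁻¹' closedBall c ε).Nonempty →
        x c ∈ X ∧ ι (x c) ∈ closedBall c ε := by
      intro c h
      simp only [hxdef, dif_pos h]
      exact ⟨h.choose_spec.1, h.choose_spec.2⟩
    have hXcov : X ⊆ ⋃ c ∈ s, closedBall (S (x c)) (2 * C * ε) := by
      intro a ha
      rw [← hSX] at ha
      obtain ⟨y, hy, rfl⟩ := ha
      have hyim : ι y ∈ ι '' X := ⟨y, hy, rfl⟩
      obtain ⟨c, hc, hyc⟩ := Set.mem_iUnion₂.mp (hscov hyim)
      have hne : (X ∩ ι ⁻¹' closedBall c ε).Nonempty := ⟨y, hy, hyc⟩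
      obtain ⟨hxX, hxball⟩ := hx c hne
      refine Set.mem_iUnion₂.mpr ⟨c, hc, ?_⟩
      rw [mem_closedBall, dist_eq_norm]
      have h1 : ‖ι y - ι (x c)‖ ≤ 2 * ε := by
        have := dist_triangle (ι y) c (ι (x c))
        rw [mem_closedBall] at hyc hxball
        rw [← dist_eq_norm]
        calc dist (ι y) (ι (x c)) ≤ dist (ι y) c + dist c (ι (x c)) := dist_triangle _ _ _
          _ ≤ ε + ε := add_le_add hyc (dist_comm c (ι (x c)) ▸ hxball)
          _ = 2 * ε := by ring
      calc ‖S y - S (x c)‖ ≤ C * ‖ι y - ι (x c)‖ := hsmooth y hy (x c) hxX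
        _ ≤ C * (2 * ε) := by
            exact mul_le_mul_of_nonneg_left h1 hC.le
        _ = 2 * C * ε := by ring
    have hball : ∀ z : E₁, ι '' closedBall z (2 * C * ε) ⊆
        ⋃ d ∈ t, closedBall (ι z + (2 * C * ε) • d) (ε / 2) := by
      intro z w hw
      obtain ⟨v, hv, rfl⟩ := hw
      set R : ℝ := 2 * C * ε with hRdef
      have hR : 0 < R := by positivity
      set u : E₁ := R⁻¹ • (v - z) with hu
      have hu1 : u ∈ closedBall (0 : E₁) 1 := by
        rw [mem_closedBall, dist_zero_right, hu, norm_smul, norm_inv, Real.norm_of_nonneg hR.le]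
        rw [mem_closedBall, dist_eq_norm] at hv
        rw [inv_mul_le_iff₀ hR, mul_one]
        exact hv
      have huB : ι u ∈ B := ⟨u, hu1, rfl⟩
      obtain ⟨d, hd, hud⟩ := Set.mem_iUnion₂.mp (htcov huB)
      refine Set.mem_iUnion₂.mpr ⟨d, hd, ?_⟩
      have hv' : v = z + R • u := by
        rw [hu, smul_smul, mul_inv_cancel₀ hR.ne', one_smul]
        abel
      rw [mem_closedBall, dist_eq_norm]
      have heq : ι v - (ι z + R • d) = R • (ι u - d) := by
        rw [hv']
        rw [map_add, map_smul]
        rw [smul_sub]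
        abel
      rw [heq, norm_smul, Real.norm_of_nonneg hR.le]
      rw [mem_closedBall, dist_eq_norm] at hud
      calc R * ‖ι u - d‖ ≤ R * (1 / (4 * C)) := mul_le_mul_of_nonneg_left hud hR.le
        _ = ε / 2 := by
          rw [hRdef]
          field_simp
          ring
    set u : Finset E := (s ×ˢ t).image (fun p => ι (S (x p.1)) + (2 * C * ε) • p.2) with hudef
    have hucov : ι '' X ⊆ ⋃ c ∈ u, closedBall c (ε / 2) := by
      rintro w ⟨a, ha, rfl⟩
      obtain ⟨c, hc, hac⟩ := Set.mem_iUnion₂.mp (hXcov ha)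
      have haim : ι a ∈ ι '' closedBall (S (x c)) (2 * C * ε) := ⟨a, hac, rfl⟩
      obtain ⟨d, hd, hw⟩ := Set.mem_iUnion₂.mp (hball (S (x c)) haim)
      exact Set.mem_iUnion₂.mpr ⟨_, Finset.mem_image.mpr
        ⟨(c, d), Finset.mem_product.mpr ⟨hc, hd⟩, rfl⟩, hw⟩
    refine ⟨⟨u, hucov⟩, ?_⟩
    calc coverNum (ι '' X) (ε / 2) ≤ u.card := coverNum_le_card hucov
      _ ≤ (s ×ˢ t).card := Finset.card_image_le
      _ = s.card * t.card := Finset.card_product _ _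
      _ = coverNum (ι '' X) ε * N := by rw [hscard, htcard]
      _ = N * coverNum (ι '' X) ε := mul_comm _ _
  -- in all cases f is eventually nonneg and eventually ≤ L + δ
  have main : ∀ δ : ℝ, 0 < δ →
      Filter.limsup f (𝓝[>] (0 : ℝ)) ≤ Real.logb 2 (N : ℝ) + δ := by
    intro δ hδ
    by_cases hXne : X.Nonempty
    · by_cases hcovX : ∃ η₀ : ℝ, 0 < η₀ ∧ ∃ s : Finset E, ι '' X ⊆ ⋃ c ∈ s, closedBall c η₀
      · obtain ⟨η₀, hη₀, hcov₀⟩ := hcovX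
        set n₀ : ℕ := coverNum (ι '' X) η₀ with hn₀def
        have hn₀1 : 1 ≤ n₀ := one_le_coverNum (hXne.image ι) hcov₀
        -- iterate
        have iter : ∀ k : ℕ,
            (∃ s : Finset E, ι '' X ⊆ ⋃ c ∈ s, closedBall c (η₀ / 2 ^ k)) ∧
            coverNum (ι '' X) (η₀ / 2 ^ k) ≤ N ^ k * n₀ := by
          intro k
          induction k with
          | zero =>
            refine ⟨?_, ?_⟩
            · simpa using hcov₀
            · simp [hn₀def]
          | succ k ih =>
            have hpos : 0 < η₀ / 2 ^ k := by positivity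
            have hstep := key (η₀ / 2 ^ k) hpos ih.1
            have heq : η₀ / 2 ^ (k + 1) = η₀ / 2 ^ k / 2 := by
              rw [pow_succ]; ring
            rw [heq]
            refine ⟨hstep.1, hstep.2.trans ?_⟩
            calc N * coverNum (ι '' X) (η₀ / 2 ^ k) ≤ N * (N ^ k * n₀) :=
                Nat.mul_le_mul_left N ih.2
              _ = N ^ (k + 1) * n₀ := by ring
        set L : ℝ := Real.logb 2 (N : ℝ) with hLdef
        set A : ℝ := (Real.logb 2 η₀ + 1) * L + Real.logb 2 (n₀ : ℝ) with hAdef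
        -- pointwise bound
        have hpt : ∀ η : ℝ, 0 < η → η < 1 → η ≤ η₀ →
            f η ≤ L + A / Real.logb 2 (1 / η) := by
          intro η hη hη1 hηη₀
          set k : ℕ := ⌈Real.logb 2 (η₀ / η)⌉₊ with hkdef
          have hratio : (1 : ℝ) ≤ η₀ / η := (one_le_div hη).mpr hηη₀
          have hlogratio : 0 ≤ Real.logb 2 (η₀ / η) := Real.logb_nonneg one_lt_two hratio
          have hk2 : η₀ / η ≤ 2 ^ k := by
            have := Nat.le_ceil (Real.logb 2 (η₀ / η))
            have h2 : η₀ / η ≤ (2 : ℝ) ^ (k : ℝ) :=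
              (Real.logb_le_iff_le_rpow one_lt_two (by positivity)).mp this
            rwa [Real.rpow_natCast] at h2
          have hk3 : η₀ / 2 ^ k ≤ η := by
            rw [div_le_iff₀ (by positivity : (0:ℝ) < 2 ^ k)]
            rw [div_le_iff₀ hη] at hk2
            linarith [hk2]
          obtain ⟨hcovk, hboundk⟩ := iter k
          obtain ⟨hmono, hcovη⟩ := coverNum_anti hk3 hcovk
          have hcn1 : 1 ≤ coverNum (ι '' X) η := one_le_coverNum (hXne.image ι) hcovη
          have hcnb : coverNum (ι '' X) η ≤ N ^ k * n₀ := hmono.trans hboundk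
          have hD : 0 < Real.logb 2 (1 / η) := by
            apply Real.logb_pos one_lt_two
            rw [lt_div_iff₀ hη, one_mul]
            exact hη1
          set D : ℝ := Real.logb 2 (1 / η) with hDdef
          have hlogcn : Real.logb 2 (coverNum (ι '' X) η : ℝ) ≤ k * L + Real.logb 2 (n₀ : ℝ) := by
            have h1 : Real.logb 2 (coverNum (ι '' X) η : ℝ) ≤
                Real.logb 2 ((N ^ k * n₀ : ℕ) : ℝ) := by
              exact Real.logb_le_logb_of_le one_lt_two
                (by exact_mod_cast Nat.lt_of_lt_of_le Nat.zero_lt_one hcn1)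
                (by exact_mod_cast hcnb)
            refine h1.trans ?_
            have : ((N ^ k * n₀ : ℕ) : ℝ) = (N : ℝ) ^ k * (n₀ : ℝ) := by push_cast; ring
            rw [this, Real.logb_mul (by positivity) (by positivity), Real.logb_pow]
          -- k bound
          have hkb : (k : ℝ) ≤ Real.logb 2 η₀ + D + 1 := by
            have h1 : (k : ℝ) < Real.logb 2 (η₀ / η) + 1 := Nat.ceil_lt_add_one hlogratio
            have h2 : Real.logb 2 (η₀ / η) = Real.logb 2 η₀ + D := by
              rw [hDdef, Real.logb_div hη₀.ne' hη.ne', Real.logb_div one_ne_zero hη.ne',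
                Real.logb_one]
              ring
            linarith
          have hnum : Real.logb 2 (coverNum (ι '' X) η : ℝ) ≤ D * L + A := by
            calc Real.logb 2 (coverNum (ι '' X) η : ℝ) ≤ k * L + Real.logb 2 (n₀ : ℝ) := hlogcn
              _ ≤ (Real.logb 2 η₀ + D + 1) * L + Real.logb 2 (n₀ : ℝ) := by
                  exact add_le_add_left (mul_le_mul_of_nonneg_right hkb hL) _
              _ = D * L + A := by rw [hAdef]; ring
          have hfeq : f η = Real.logb 2 (coverNum (ι '' X) η : ℝ) / D := rfl
          rw [hfeq, div_le_iff₀ hD]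
          have hexp : (L + A / D) * D = D * L + A := by field_simp
          linarith [hnum]
        -- limit
        have hlogTop : Filter.Tendsto (fun η : ℝ => Real.logb 2 (1 / η)) (𝓝[>] (0:ℝ)) atTop := by
          simp only [one_div]
          exact (Real.tendsto_logb_atTop one_lt_two).comp tendsto_inv_nhdsGT_zero
        have hg : Filter.Tendsto (fun η : ℝ => A / Real.logb 2 (1 / η)) (𝓝[>] 0) (𝓝 0) :=
          Filter.Tendsto.div_atTop tendsto_const_nhds hlogTop
        have hev : ∀ᶠ η in 𝓝[>] (0 : ℝ), f η ≤ L + δ := by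
          have hsmall : ∀ᶠ η in 𝓝[>] (0 : ℝ), η < min η₀ 1 := by
            apply eventually_nhdsWithin_of_eventually_nhds
            exact eventually_lt_nhds (lt_min hη₀ one_pos)
          have hgδ : ∀ᶠ η in 𝓝[>] (0 : ℝ), A / Real.logb 2 (1 / η) ≤ δ := by
            have := hg.eventually (eventually_le_nhds hδ)
            simpa using this
          filter_upwards [hsmall, hgδ, self_mem_nhdsWithin] with η h1 h2 h3
          have hη : 0 < η := h3
          have := hpt η hη (h1.trans_le (min_le_right _ _)) (h1.trans_le (min_le_left _ _)).le
          linarith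
        have hcb : IsCoboundedUnder (· ≤ ·) (𝓝[>] (0 : ℝ)) f := by
          apply isCoboundedUnder_le_of_eventually_le
          have hsmall : ∀ᶠ η in 𝓝[>] (0 : ℝ), η < min η₀ 1 := by
            apply eventually_nhdsWithin_of_eventually_nhds
            exact eventually_lt_nhds (lt_min hη₀ one_pos)
          filter_upwards [hsmall, self_mem_nhdsWithin] with η h1 h3
          have hη : 0 < η := h3
          have hη1 : η < 1 := h1.trans_le (min_le_right _ _)
          have hηη₀ : η ≤ η₀ := (h1.trans_le (min_le_left _ _)).le
          obtain ⟨hcovk, _⟩ := iter 0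
          have : ∃ s : Finset E, ι '' X ⊆ ⋃ c ∈ s, closedBall c η := by
            set k : ℕ := ⌈Real.logb 2 (η₀ / η)⌉₊
            have hk2 : η₀ / η ≤ 2 ^ k := by
              have h := Nat.le_ceil (Real.logb 2 (η₀ / η))
              have h2 : η₀ / η ≤ (2 : ℝ) ^ (k : ℝ) :=
                (Real.logb_le_iff_le_rpow one_lt_two (by positivity)).mp h
              rwa [Real.rpow_natCast] at h2
            have hk3 : η₀ / 2 ^ k ≤ η := by
              rw [div_le_iff₀ (by positivity : (0:ℝ) < 2 ^ k)]
              rw [div_le_iff₀ hη] at hk2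
              linarith
            exact (coverNum_anti hk3 (iter k).1).2
          have hcn1 : 1 ≤ coverNum (ι '' X) η := one_le_coverNum (hXne.image ι) this
          have hD : 0 < Real.logb 2 (1 / η) := by
            apply Real.logb_pos one_lt_two
            rw [lt_div_iff₀ hη, one_mul]
            exact hη1
          apply div_nonneg _ hD.le
          exact Real.logb_nonneg one_lt_two (by exact_mod_cast hcn1)
        exact limsup_le_of_le hcb hev
      · -- no cover at any radius: coverNum is 0 everywhere
        push_neg at hcovX
        have hev : ∀ᶠ η in 𝓝[>] (0 : ℝ), f η = 0 := by
          filter_upwards [self_mem_nhdsWithin] with η hη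
          have : coverNum (ι '' X) η = 0 := by
            rw [coverNum]
            convert Nat.sInf_empty
            rw [Set.eq_empty_iff_forall_notMem]
            rintro n ⟨s, _, hcov⟩
            exact hcovX η hη s hcov
          have hfη : f η = Real.logb 2 (coverNum (ι '' X) η : ℝ) / Real.logb 2 (1 / η) := rfl
          rw [hfη, this]
          simp
        have hcb : IsCoboundedUnder (· ≤ ·) (𝓝[>] (0 : ℝ)) f :=
          isCoboundedUnder_le_of_eventually_le _ (hev.mono fun η h => h.ge)
        have : Filter.limsup f (𝓝[>] (0 : ℝ)) ≤ 0 :=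
          limsup_le_of_le hcb (hev.mono fun η h => h.le)
        linarith
    · -- X empty
      rw [Set.not_nonempty_iff_eq_empty] at hXne
      subst hXne
      have hev : ∀ᶠ η in 𝓝[>] (0 : ℝ), f η = 0 := by
        filter_upwards with η
        have : coverNum (ι '' (∅ : Set E₁)) η = 0 := by
          have h0 : coverNum (ι '' (∅ : Set E₁)) η ≤ (∅ : Finset E).card :=
            coverNum_le_card (by simp)
          simpa using h0
        have hfη : f η = Real.logb 2 (coverNum (ι '' (∅ : Set E₁)) η : ℝ) /
            Real.logb 2 (1 / η) := rfl
        rw [hfη, this]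
        simp
      have hcb : IsCoboundedUnder (· ≤ ·) (𝓝[>] (0 : ℝ)) f :=
        isCoboundedUnder_le_of_eventually_le _ (hev.mono fun η h => h.ge)
      have : Filter.limsup f (𝓝[>] (0 : ℝ)) ≤ 0 :=
        limsup_le_of_le hcb (hev.mono fun η h => h.le)
      linarith
  exact le_of_forall_pos_le_add main
end
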